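/- arXiv:2001.00221 — 3 statements merged into one kernel-verified Lean document; each statement's English description precedes it below -/
import Mathlib

section
/- For every integer n ≥ 5, every proper coloring of the Kneser graph KG(n,2) with exactly n − 2 nonempty color classes contains exactly one triangular color class, i.e., exactly one color class of the form {{a,b},{a,c},{b,c}} for distinct a,b,c ∈ {1,…,n}. -/
/-- The vertex type of the Kneser graph `KG(n,2)`: 2-element subsets of `{0,…,n-1}`. -/
abbrev KVert (n : ℕ) := {s : Finset (Fin n) // s.card = 2}

/-- The Kneser graph `KG(n,2)`: vertices are 2-subsets, adjacent iff disjoint. -/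
def KG2 (n : ℕ) : SimpleGraph (KVert n) where
  Adj u v := Disjoint u.1 v.1
  symm := ⟨fun u v h => h.symm⟩
  loopless := ⟨fun u h => by
    have h2 := u.2
    have h' : Disjoint u.1 u.1 := h
    rw [disjoint_self] at h'
    simp [h'] at h2⟩

/-- A proper coloring of `G` with `k` (nonempty) color classes: a partition of the
vertex set into `k` nonempty independent sets. -/
def IsProperColoring {V : Type*} (G : SimpleGraph V) {k : ℕ} (C : Fin k → Set V) : Prop :=
  (∀ v, ∃! i, v ∈ C i) ∧ (∀ i, (C i).Nonempty) ∧
    ∀ i, ∀ u ∈ C i, ∀ w ∈ C i, ¬ G.Adj u w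

/-- A total dominator coloring: a proper coloring such that every vertex is adjacent to
all vertices of some (nonempty) color class. -/
def IsTDColoring {V : Type*} (G : SimpleGraph V) {k : ℕ} (C : Fin k → Set V) : Prop :=
  IsProperColoring G C ∧ ∀ v, ∃ i, (C i).Nonempty ∧ ∀ u ∈ C i, G.Adj v u

/-- The chromatic number: minimum number of color classes in a proper coloring. -/
noncomputable def chromNum {V : Type*} (G : SimpleGraph V) : ℕ :=
  sInf {k | ∃ C : Fin k → Set V, IsProperColoring G C}

/-- The total dominator chromatic number: minimum number of color classes in a TDC. -/
noncomputable def tdChromNum {V : Type*} (G : SimpleGraph V) : ℕ :=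
  sInf {k | ∃ C : Fin k → Set V, IsTDColoring G C}

/-- A total dominating set: every vertex has a neighbor in `S`. -/
def IsTotalDomSet {V : Type*} (G : SimpleGraph V) (S : Set V) : Prop :=
  ∀ v, ∃ u ∈ S, G.Adj v u

/-- The total domination number: minimum size of a total dominating set. -/
noncomputable def totalDomNum {V : Type*} [Fintype V] (G : SimpleGraph V) : ℕ :=
  sInf {k | ∃ S : Finset V, IsTotalDomSet G ↑S ∧ S.card = k}

/-- A set of vertices of `KG(n,2)` is starlike if all its 2-subsets share a common symbol. -/
def Starlike {n : ℕ} (A : Set (KVert n)) : Prop :=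
  ∃ a : Fin n, ∀ v ∈ A, a ∈ v.1

/-- A set of vertices of `KG(n,2)` is triangular if it equals `{{a,b},{a,c},{b,c}}`
for three distinct symbols `a, b, c`. -/
def Triangular {n : ℕ} (A : Set (KVert n)) : Prop :=
  ∃ a b c : Fin n, a ≠ b ∧ a ≠ c ∧ b ≠ c ∧
    A = {v : KVert n | v.1 = {a, b} ∨ v.1 = {a, c} ∨ v.1 = {b, c}}

/-!
Every colour class of a proper colouring of `KG(n,2)` is an intersecting family of pairs, hence
a star (all its pairs share a symbol) or a triangle (all pairs inside a 3-set). Let `t` be the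
number of triangles. Removing the at most `k - t` star centres leaves a set `N` of at least
`n - k + t ≥ t + 2` symbols, every pair inside `N` lies in a triangle, and distinct triangles
share at most one symbol. Counting pairs gives `(t + 2).choose 2 ≤ 3 t`, so `t ∈ {1, 2}`; and
`t = 2` is impossible: a point of `N` has at least three partners in `N`, while a triangle
through it covers at most two of them, so every point of `N` would lie in both triangles.
-/

open Finset

namespace Finset

variable {α : Type*} [DecidableEq α] {s : Finset α} {a b c : α}

theorem exists_eq_pair_of_mem (hs : #s = 2) (ha : a ∈ s) : ∃ b, a ≠ b ∧ s = {a, b} := by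
  obtain ⟨p, q, hpq, rfl⟩ := card_eq_two.1 hs
  rcases mem_insert.1 ha with rfl | ha
  · exact ⟨q, hpq, rfl⟩
  · rw [mem_singleton.1 ha]
    exact ⟨p, hpq.symm, pair_comm _ _⟩

theorem mem_of_not_disjoint_pair (h : ¬ Disjoint s {a, b}) (ha : a ∉ s) : b ∈ s := by
  simpa [disjoint_insert_right, ha] using h

theorem subset_triple_iff_of_card_eq_two (hs : #s = 2) :
    s ⊆ {a, b, c} ↔ s = {a, b} ∨ s = {a, c} ∨ s = {b, c} := by
  obtain ⟨p, q, hpq, rfl⟩ := card_eq_two.1 hs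
  constructor
  · intro h
    simp only [insert_subset_iff, mem_insert, mem_singleton, singleton_subset_iff] at h
    rcases h with ⟨rfl | rfl | rfl, rfl | rfl | rfl⟩ <;> simp_all [pair_comm]
  · rintro (h | h | h) <;> rw [h] <;> simp [insert_subset_iff]

theorem subset_triple_of_not_disjoint (hs : #s = 2) (hab : a ≠ b) (hac : a ≠ c) (hbc : b ≠ c)
    (hab' : ¬ Disjoint s {a, b}) (hbc' : ¬ Disjoint s {b, c}) (hac' : ¬ Disjoint s {a, c}) :
    s ⊆ {a, b, c} := by
  obtain ⟨p, q, hpq, rfl⟩ := card_eq_two.1 hs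
  simp only [disjoint_insert_left, disjoint_insert_right, disjoint_singleton, mem_insert,
    mem_singleton, not_and_or, not_not] at hab' hbc' hac'
  simp only [insert_subset_iff, mem_insert, mem_singleton, singleton_subset_iff]
  grind

end Finset

section TripleCover

variable {ι α : Type*} [DecidableEq α] {T : ι → Finset α} {N : Finset α}

theorem choose_two_card_le_of_triples_cover {I : Finset ι} (hT : ∀ i ∈ I, #(T i) = 3)
    (hcover : ∀ x ∈ N, ∀ y ∈ N, x ≠ y → ∃ i ∈ I, x ∈ T i ∧ y ∈ T i) :
    (#N).choose 2 ≤ 3 * #I := by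
  have hpairs : N.powersetCard 2 ⊆ I.biUnion fun i => (T i).powersetCard 2 := by
    intro s hs
    obtain ⟨hsN, hs⟩ := mem_powersetCard.1 hs
    obtain ⟨x, y, hxy, rfl⟩ := card_eq_two.1 hs
    obtain ⟨i, hi, hx, hy⟩ := hcover x (hsN (by simp)) y (hsN (by simp)) hxy
    exact mem_biUnion.2 ⟨i, hi, mem_powersetCard.2 ⟨by simp [insert_subset_iff, hx, hy], hs⟩⟩
  calc (#N).choose 2 = #(N.powersetCard 2) := (card_powersetCard 2 N).symm
    _ ≤ #I * 3 := (card_le_card hpairs).trans <| card_biUnion_le_card_mul _ _ _ fun i hi => by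
        rw [card_powersetCard, hT i hi]; rfl
    _ = 3 * #I := mul_comm _ _

theorem mem_of_two_triples_cover {T₁ T₂ : Finset α} {x : α} (h₁ : #T₁ = 3) (hN : 4 ≤ #N)
    (hx : x ∈ N) (hcover : ∀ y ∈ N, x ≠ y → x ∈ T₁ ∧ y ∈ T₁ ∨ x ∈ T₂ ∧ y ∈ T₂) : x ∈ T₂ := by
  by_contra hx₂
  have hcover₁ : ∀ y ∈ N.erase x, x ∈ T₁ ∧ y ∈ T₁ := fun y hy =>
    (hcover y (mem_of_mem_erase hy) (ne_of_mem_erase hy).symm).resolve_right (hx₂ ·.1)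
  have hcard : #(N.erase x) = #N - 1 := card_erase_of_mem hx
  obtain ⟨y, hy⟩ : (N.erase x).Nonempty := card_pos.1 (by omega)
  have hsub : N.erase x ⊆ T₁.erase x := fun z hz =>
    mem_erase.2 ⟨ne_of_mem_erase hz, (hcover₁ z hz).2⟩
  have := card_le_card hsub
  rw [card_erase_of_mem (hcover₁ y hy).1] at this
  omega

theorem not_two_triples_cover {T₁ T₂ : Finset α} (h₁ : #T₁ = 3) (h₂ : #T₂ = 3)
    (h₁₂ : #(T₁ ∩ T₂) ≤ 1) (hN : 4 ≤ #N)
    (hcover : ∀ x ∈ N, ∀ y ∈ N, x ≠ y → x ∈ T₁ ∧ y ∈ T₁ ∨ x ∈ T₂ ∧ y ∈ T₂) : False := by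
  have hsub : N ⊆ T₁ ∩ T₂ := fun x hx => mem_inter.2
    ⟨mem_of_two_triples_cover h₂ hN hx fun y hy hxy => (hcover x hx y hy hxy).symm,
      mem_of_two_triples_cover h₁ hN hx (hcover x hx)⟩
  have := card_le_card hsub
  omega

theorem card_eq_one_of_triples_cover {I : Finset ι} (hT : ∀ i ∈ I, #(T i) = 3)
    (hmeet : ∀ i ∈ I, ∀ j ∈ I, i ≠ j → #(T i ∩ T j) ≤ 1) (hN : #I + 2 ≤ #N)
    (hcover : ∀ x ∈ N, ∀ y ∈ N, x ≠ y → ∃ i ∈ I, x ∈ T i ∧ y ∈ T i) : #I = 1 := by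
  classical
  have hchoose : (#I + 2).choose 2 ≤ 3 * #I :=
    (Nat.choose_le_choose 2 hN).trans (choose_two_card_le_of_triples_cover hT hcover)
  have hquad : (#I + 2) * (#I + 1) < (3 * #I + 1) * 2 := by
    rw [Nat.choose_two_right] at hchoose
    exact (Nat.div_lt_iff_lt_mul two_pos).1 (Nat.lt_succ_of_le hchoose)
  obtain h | h : #I = 1 ∨ #I = 2 := by
    have : #I ≤ 2 := by nlinarith
    interval_cases #I <;> simp_all
  · exact h
  obtain ⟨i, j, hij, rfl⟩ := card_eq_two.1 h
  refine (not_two_triples_cover (N := N) (hT i (by simp)) (hT j (by simp))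
    (hmeet i (by simp) j (by simp) hij) (by omega) fun x hx y hy hxy => ?_).elim
  simpa using hcover x hx y hy hxy

end TripleCover

section KneserColoring

variable {n : ℕ}

theorem triangular_iff {A : Set (KVert n)} :
    Triangular A ↔ ∃ T : Finset (Fin n), #T = 3 ∧ A = {v | v.1 ⊆ T} := by
  simp only [Triangular, card_eq_three]
  constructor
  · rintro ⟨a, b, c, hab, hac, hbc, rfl⟩
    exact ⟨_, ⟨a, b, c, hab, hac, hbc, rfl⟩, by ext v; simp [subset_triple_iff_of_card_eq_two v.2]⟩
  · rintro ⟨_, ⟨a, b, c, hab, hac, hbc, rfl⟩, rfl⟩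
    exact ⟨a, b, c, hab, hac, hbc, by ext v; simp [subset_triple_iff_of_card_eq_two v.2]⟩

theorem starlike_or_triangular {A : Set (KVert n)} (hne : A.Nonempty)
    (hA : ∀ u ∈ A, ∀ w ∈ A, ¬ Disjoint u.1 w.1) : Starlike A ∨ Triangular A := by
  refine or_iff_not_imp_left.2 fun hstar => ?_
  simp only [Starlike, not_exists, not_forall] at hstar
  obtain ⟨⟨_, hu₂⟩, hu⟩ := hne
  obtain ⟨a, b, hab, rfl⟩ := card_eq_two.1 hu₂
  obtain ⟨⟨_, hw₂⟩, hw, haw⟩ := hstar a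
  obtain ⟨c, hbc, rfl⟩ := exists_eq_pair_of_mem hw₂ (mem_of_not_disjoint_pair (hA _ hw _ hu) haw)
  obtain ⟨⟨_, hz₂⟩, hz, hbz⟩ := hstar b
  have haz := mem_of_not_disjoint_pair (b := a) (by rw [pair_comm]; exact hA _ hz _ hu) hbz
  have hac : a ≠ c := by rintro rfl; simp at haw
  obtain ⟨c', -, rfl⟩ := exists_eq_pair_of_mem hz₂ haz
  obtain rfl : c = c' := by
    simpa [hac.symm] using mem_of_not_disjoint_pair (hA _ hz _ hw) hbz
  refine triangular_iff.2 ⟨{a, b, c}, card_eq_three.2 ⟨a, b, c, hab, hac, hbc, rfl⟩, ?_⟩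
  ext ⟨v, hv⟩
  refine ⟨fun hvA => subset_triple_of_not_disjoint hv hab hac hbc
    (hA _ hvA _ hu) (hA _ hvA _ hw) (hA _ hvA _ hz), fun hvT => ?_⟩
  rcases (subset_triple_iff_of_card_eq_two hv).1 hvT with rfl | rfl | rfl <;> assumption

theorem card_inter_le_one_of_existsUnique_mem {ι : Type*} {C : ι → Set (KVert n)}
    (hpart : ∀ v, ∃! i, v ∈ C i) {i j : ι} (hij : i ≠ j) {S S' : Finset (Fin n)}
    (hi : C i = {v | v.1 ⊆ S}) (hj : C j = {v | v.1 ⊆ S'}) : #(S ∩ S') ≤ 1 := by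
  by_contra! h
  obtain ⟨x, hx, y, hy, hxy⟩ := one_lt_card.1 h
  have hxy' : ({x, y} : Finset (Fin n)) ⊆ S ∩ S' := by simp [insert_subset_iff, hx, hy]
  obtain ⟨l, -, hl⟩ := hpart ⟨{x, y}, card_pair hxy⟩
  refine hij ((hl i ?_).trans (hl j ?_).symm)
  · show _ ∈ C i
    rw [hi]
    exact hxy'.trans inter_subset_left
  · show _ ∈ C j
    rw [hj]
    exact hxy'.trans inter_subset_right

theorem existsUnique_triangular_of_isProperColoring {k : ℕ} (hk : k + 2 ≤ n)
    {C : Fin k → Set (KVert n)} (hC : IsProperColoring (KG2 n) C) :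
    ∃! i, Triangular (C i) := by
  classical
  obtain ⟨hpart, hne, hind⟩ := hC
  have : Nonempty (Fin n) := ⟨⟨0, by omega⟩⟩
  rw [Fintype.existsUnique_iff_card_one]
  set Tri : Finset (Fin k) := {i | Triangular (C i)}
  choose! T hT hCT using fun i (hi : i ∈ Tri) => triangular_iff.1 (mem_filter.1 hi).2
  choose! ctr hctr using fun i (hi : i ∈ Triᶜ) =>
    (starlike_or_triangular (hne i) (hind i)).resolve_right (by simpa [Tri] using hi)
  refine card_eq_one_of_triples_cover (N := (Triᶜ.image ctr)ᶜ) hT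
    (fun i hi j hj hij => card_inter_le_one_of_existsUnique_mem hpart hij (hCT i hi) (hCT j hj))
    ?_ fun x hx y hy hxy => ?_
  · have hcentres : #(Triᶜ.image ctr) ≤ k - #Tri :=
      card_image_le.trans_eq (by rw [card_compl, Fintype.card_fin])
    have hTri : #Tri ≤ k := (card_le_univ Tri).trans_eq (Fintype.card_fin k)
    rw [card_compl, Fintype.card_fin]
    omega
  · obtain ⟨i, hi, -⟩ := hpart ⟨{x, y}, card_pair hxy⟩
    by_cases hiT : i ∈ Tri
    · rw [hCT i hiT] at hi
      exact ⟨i, hiT, hi (by simp), hi (by simp)⟩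
    · have hctr_notMem : ctr i ∉ (Triᶜ.image ctr)ᶜ := by simpa using ⟨i, hiT, rfl⟩
      have hpairN : ({x, y} : Finset (Fin n)) ⊆ (Triᶜ.image ctr)ᶜ :=
        insert_subset_iff.2 ⟨hx, singleton_subset_iff.2 hy⟩
      exact (hctr_notMem (hpairN (hctr i (mem_compl.2 hiT) _ hi))).elim

end KneserColoring

/-- For every `n ≥ 5`, every proper coloring of `KG(n,2)` with
exactly `n - 2` nonempty color classes has exactly one triangular color class. -/
theorem stmt4 (n : ℕ) (hn : 5 ≤ n)
    (C : Fin (n - 2) → Set (KVert n)) (hC : IsProperColoring (KG2 n) C) :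
    ∃! i : Fin (n - 2), Triangular (C i) :=
  existsUnique_triangular_of_isProperColoring (by omega) hC
end

section
/- Let n ≥ 5 and let f be a proper coloring of the Kneser graph KG(n,2) with exactly n − 1 nonempty color classes such that every color class is starlike (all vertices in the class share a common symbol). Then f is not a total dominator coloring. -/
/-!
Let `a i` be a common symbol of the class `C i`. Every pair `{y, z}` lies in some class, whose
centre is then `y` or `z`; so at most one symbol is not a centre. With only `n - 1` classes this
forces the centres to be distinct and to miss exactly one symbol `z`. For a non-centre `z`, the
pair `{z, a j}` must lie in the class `C j`, so no class totally dominates a vertex containing `z`.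
-/

open Finset

theorem Function.Injective.of_pairs_meet_range {α β : Type*} [Fintype α] [Fintype β]
    (a : α → β) (hcard : Fintype.card α < Fintype.card β)
    (hpair : ∀ y z, y ≠ z → y ∈ Set.range a ∨ z ∈ Set.range a) :
    Function.Injective a := by
  classical
  by_contra hinj
  have hrange : #(univ.image a) < Fintype.card α := by
    refine lt_of_le_of_ne card_image_le fun h => hinj ?_
    simpa [Set.injOn_univ] using card_image_iff.mp h
  have hcompl : 1 < #(univ.image a)ᶜ := by
    rw [card_compl]
    omega
  obtain ⟨y, hy, z, hz, hyz⟩ := one_lt_card.mp hcompl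
  simp only [mem_compl, mem_image, mem_univ, true_and, ← Set.mem_range] at hy hz
  exact (hpair y z hyz).elim hy hz

def KVert.pair {n : ℕ} (y z : Fin n) (h : y ≠ z) : KVert n :=
  ⟨{y, z}, card_pair h⟩

@[simp]
theorem KVert.mem_pair {n : ℕ} {y z x : Fin n} (h : y ≠ z) :
    x ∈ (KVert.pair y z h).1 ↔ x = y ∨ x = z := by
  simp [KVert.pair]

section Centers

variable {n : ℕ} {ι : Type*} (C : ι → Set (KVert n)) (a : ι → Fin n)
  (hcover : ∀ v, ∃ i, v ∈ C i) (ha : ∀ i, ∀ v ∈ C i, a i ∈ v.1)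
include hcover ha

theorem pairs_meet_range_of_centers (y z : Fin n) (hyz : y ≠ z) :
    y ∈ Set.range a ∨ z ∈ Set.range a := by
  obtain ⟨i, hi⟩ := hcover (KVert.pair y z hyz)
  rcases (KVert.mem_pair hyz).mp (ha i _ hi) with h | h
  · exact Or.inl ⟨i, h⟩
  · exact Or.inr ⟨i, h⟩

theorem pair_mem_of_notMem_range (hinj : Function.Injective a) {z : Fin n}
    (hz : z ∉ Set.range a) (j : ι) (hzj : z ≠ a j) :
    KVert.pair z (a j) hzj ∈ C j := by
  obtain ⟨k, hk⟩ := hcover (KVert.pair z (a j) hzj)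
  rcases (KVert.mem_pair hzj).mp (ha k _ hk) with h | h
  · exact absurd ⟨k, h⟩ hz
  · rwa [hinj h] at hk

end Centers

/-- Let `n ≥ 5` and let `C` be a proper coloring of `KG(n,2)` with
exactly `n - 1` nonempty color classes, all of which are starlike. Then `C` is not a
total dominator coloring. -/
theorem stmt7 (n : ℕ) (hn : 5 ≤ n)
    (C : Fin (n - 1) → Set (KVert n)) (hC : IsProperColoring (KG2 n) C)
    (hstar : ∀ i, Starlike (C i)) :
    ¬ IsTDColoring (KG2 n) C := by
  rintro ⟨-, hdom⟩
  choose a ha using hstar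
  have hcover : ∀ v, ∃ i, v ∈ C i := fun v => (hC.1 v).exists
  have hcard : Fintype.card (Fin (n - 1)) < Fintype.card (Fin n) := by
    simp only [Fintype.card_fin]
    omega
  have hinj : Function.Injective a :=
    .of_pairs_meet_range a hcard (pairs_meet_range_of_centers C a hcover ha)
  obtain ⟨z, hz⟩ : ∃ z, z ∉ Set.range a := by
    by_contra! hsurj
    exact (Fintype.card_le_of_surjective a hsurj).not_gt hcard
  have : Nontrivial (Fin n) := Fin.nontrivial_iff_two_le.mpr (by omega)
  obtain ⟨x, hxz⟩ := exists_ne z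
  obtain ⟨j, -, hj⟩ := hdom (KVert.pair z x hxz.symm)
  have hzj : z ≠ a j := fun h => hz ⟨j, h.symm⟩
  have hdisj : Disjoint (KVert.pair z x _).1 (KVert.pair z (a j) hzj).1 :=
    hj _ (pair_mem_of_notMem_range C a hcover ha hinj hz j hzj)
  exact disjoint_left.mp hdisj ((KVert.mem_pair _).mpr (.inl rfl))
    ((KVert.mem_pair _).mpr (.inl rfl))
end

section
/- For every integer n ≥ 6, the total dominator chromatic number of the Kneser graph KG(n,2) equals n. -/
open Finset

lemma isTDColoring_of_fibers {V : Type*} {G : SimpleGraph V} {k : ℕ} (f : V → Fin k)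
    (hf : Function.Surjective f) (hind : ∀ u w, f u = f w → ¬ G.Adj u w)
    (hdom : ∀ v, ∃ i, ∀ u, f u = i → G.Adj v u) :
    IsTDColoring G fun i => f ⁻¹' {i} := by
  refine ⟨⟨fun v => ⟨f v, rfl, fun i hi => hi.symm⟩, fun i => hf i,
    fun i u hu w hw => hind u w (hu.trans hw.symm)⟩, fun v => ?_⟩
  obtain ⟨i, hi⟩ := hdom v
  exact ⟨i, hf i, hi⟩

lemma sum_card_filter_mem_eq_card {V : Type*} {k : ℕ} {C : Fin k → Set V}
    (hC : ∀ v, ∃! i, v ∈ C i) (s : Finset V) [∀ i, DecidablePred (· ∈ C i)] :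
    ∑ i, #{v ∈ s | v ∈ C i} = #s := by
  simp_rw [card_filter]
  rw [sum_comm, card_eq_sum_ones]
  refine sum_congr rfl fun v _ => ?_
  rw [← card_filter]
  obtain ⟨i, hi, huniq⟩ := hC v
  exact card_eq_one.mpr ⟨i, by ext j; simpa using ⟨huniq j, fun h => h ▸ hi⟩⟩

section TriangleCover

variable {α ι : Type*} [DecidableEq α] {T : Finset ι} {A : ι → Finset α} {Z : Finset α}

lemma Finset.sum_sum_filter_mem_eq_sum_card_inter_mul (g : ι → ℕ) :
    ∑ z ∈ Z, ∑ i ∈ T with z ∈ A i, g i = ∑ i ∈ T, #(A i ∩ Z) * g i := by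
  have := sum_sum_bipartiteAbove_eq_sum_sum_bipartiteBelow (fun z i => z ∈ A i) (fun _ i => g i)
    (s := Z) (t := T)
  simp only [bipartiteAbove, bipartiteBelow, sum_const, smul_eq_mul] at this
  rw [this]
  refine sum_congr rfl fun i _ => ?_
  rw [filter_mem_eq_inter, inter_comm]

lemma Finset.five_le_card_union {B C : Finset α} (hB : #B = 3) (hC : #C = 3)
    (h : #(B ∩ C) ≤ 1) : 5 ≤ #(B ∪ C) := by
  have := card_union_add_card_inter B C
  omega

lemma Finset.six_le_card_union_union {B C D : Finset α} (hB : #B = 3) (hC : #C = 3)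
    (hD : #D = 3) (hBC : #(B ∩ C) ≤ 1) (hBD : #(B ∩ D) ≤ 1) (hCD : #(C ∩ D) ≤ 1) :
    6 ≤ #(B ∪ C ∪ D) := by
  have h₁ := card_union_add_card_inter (B ∪ C) D
  have h₂ : #((B ∪ C) ∩ D) ≤ #(B ∩ D) + #(C ∩ D) := by
    rw [union_inter_distrib_right]; exact card_union_le _ _
  have := five_le_card_union hB hC hBC
  omega

lemma card_sub_one_le_sum_of_covers
    (hcover : ∀ x ∈ Z, ∀ y ∈ Z, x ≠ y → ∃ i ∈ T, x ∈ A i ∧ y ∈ A i) {z : α}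
    (hz : z ∈ Z) : #Z - 1 ≤ ∑ i ∈ T with z ∈ A i, (#(A i ∩ Z) - 1) := by
  have hsub : Z.erase z ⊆ (T.filter (z ∈ A ·)).biUnion fun i => (A i ∩ Z).erase z := by
    intro y hy
    obtain ⟨hyz, hyZ⟩ := mem_erase.mp hy
    obtain ⟨i, hi, hzi, hyi⟩ := hcover z hz y hyZ hyz.symm
    exact mem_biUnion.mpr
      ⟨i, mem_filter.mpr ⟨hi, hzi⟩, mem_erase.mpr ⟨hyz, mem_inter.mpr ⟨hyi, hyZ⟩⟩⟩
  calc #Z - 1 = #(Z.erase z) := (card_erase_of_mem hz).symm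
    _ ≤ _ := (card_le_card hsub).trans card_biUnion_le
    _ = _ := sum_congr rfl fun i hi => by
        rw [card_erase_of_mem (mem_inter.mpr ⟨(mem_filter.mp hi).2, hz⟩)]

theorem card_le_card_of_triangle_cover
    (hA : ∀ i ∈ T, #(A i) = 3)
    (hlin : ∀ i ∈ T, ∀ j ∈ T, i ≠ j → #(A i ∩ A j) ≤ 1)
    (hcover : ∀ x ∈ Z, ∀ y ∈ Z, x ≠ y → ∃ i ∈ T, x ∈ A i ∧ y ∈ A i)
    (hdeg : ∀ z ∈ Z, 2 ≤ #{i ∈ T | z ∈ A i}) : #Z ≤ #T := by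
  by_contra! hT
  set B := T.filter fun i => A i ⊆ Z with hB
  -- Counting incidences gives `#B ≥ 2`, so `#Z ≥ 5`. If `#Z ≥ 6`, covering the pairs through
  -- a point needs three triangles there, too many incidences; if `#Z = 5`, counting pairs
  -- gives three triangles inside `Z`, which need six points.
  have ha_le : ∀ i ∈ T, #(A i ∩ Z) ≤ 2 + if A i ⊆ Z then 1 else 0 := by
    intro i hi
    have h3 : #(A i ∩ Z) ≤ 3 := hA i hi ▸ card_le_card inter_subset_left
    split_ifs with hZ
    · omega
    · have hlt : #(A i ∩ Z) < #(A i) := card_lt_card <| Finset.ssubset_iff_subset_ne.mpr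
        ⟨inter_subset_left, by rwa [Ne, inter_eq_left]⟩
      rw [hA i hi] at hlt
      omega
  have hsum_le : ∑ i ∈ T, #(A i ∩ Z) ≤ 2 * #T + #B := by
    calc ∑ i ∈ T, #(A i ∩ Z)
        ≤ ∑ i ∈ T, (2 + if A i ⊆ Z then 1 else 0) := sum_le_sum ha_le
      _ = 2 * #T + #B := by rw [sum_add_distrib, sum_boole]; simp [mul_comm, hB]
  have hsum_deg : ∑ z ∈ Z, #{i ∈ T | z ∈ A i} = ∑ i ∈ T, #(A i ∩ Z) := by
    simpa using sum_sum_filter_mem_eq_sum_card_inter_mul (T := T) (A := A) (Z := Z) fun _ => 1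
  have hsum_ge : 2 * #Z ≤ ∑ i ∈ T, #(A i ∩ Z) := by
    rw [← hsum_deg, mul_comm]
    exact card_nsmul_le_sum _ _ _ hdeg
  have hB2 : 1 < #B := by omega
  have hZ5 : 5 ≤ #Z := by
    obtain ⟨i, hi, j, hj, hij⟩ := one_lt_card.mp hB2
    rw [mem_filter] at hi hj
    exact (five_le_card_union (hA i hi.1) (hA j hj.1) (hlin i hi.1 j hj.1 hij)).trans
      (card_le_card (union_subset hi.2 hj.2))
  have hZ_le : #Z ≤ 5 := by
    by_contra! h6
    have hdeg3 : ∀ z ∈ Z, 3 ≤ #{i ∈ T | z ∈ A i} := by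
      intro z hz
      have h₁ := card_sub_one_le_sum_of_covers hcover hz
      have h₂ : ∑ i ∈ T with z ∈ A i, (#(A i ∩ Z) - 1) ≤ #{i ∈ T | z ∈ A i} • 2 :=
        sum_le_card_nsmul _ _ _ fun i hi => by
          have := ha_le i (mem_filter.mp hi).1
          split_ifs at this <;> omega
      rw [smul_eq_mul] at h₂
      omega
    have h₁ : #Z • 3 ≤ ∑ i ∈ T, #(A i ∩ Z) := hsum_deg ▸ card_nsmul_le_sum _ _ _ hdeg3
    have h₂ : ∑ i ∈ T, #(A i ∩ Z) ≤ #T • 3 :=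
      sum_le_card_nsmul _ _ _ fun i hi => hA i hi ▸ card_le_card inter_subset_left
    rw [smul_eq_mul] at h₁ h₂
    omega
  have hpairs : #Z * (#Z - 1) ≤ 2 * #T + 4 * #B := by
    calc #Z * (#Z - 1) = ∑ z ∈ Z, (#Z - 1) := by rw [sum_const, smul_eq_mul]
      _ ≤ ∑ z ∈ Z, ∑ i ∈ T with z ∈ A i, (#(A i ∩ Z) - 1) :=
          sum_le_sum fun z hz => card_sub_one_le_sum_of_covers hcover hz
      _ = ∑ i ∈ T, #(A i ∩ Z) * (#(A i ∩ Z) - 1) :=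
          sum_sum_filter_mem_eq_sum_card_inter_mul _
      _ ≤ ∑ i ∈ T, (2 + 4 * if A i ⊆ Z then 1 else 0) := sum_le_sum fun i hi => by
          have := ha_le i hi
          refine (Nat.mul_le_mul this (Nat.sub_le_sub_right this 1)).trans ?_
          split_ifs <;> norm_num
      _ = 2 * #T + 4 * #B := by rw [sum_add_distrib, ← mul_sum, sum_boole]; simp [mul_comm, hB]
  have hB3 : 2 < #B := by
    rw [show #Z = 5 by omega] at hpairs
    omega
  obtain ⟨i, j, l, hi, hj, hl, hij, hil, hjl⟩ := two_lt_card_iff.mp hB3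
  rw [mem_filter] at hi hj hl
  have := (six_le_card_union_union (hA i hi.1) (hA j hj.1) (hA l hl.1) (hlin i hi.1 j hj.1 hij)
    (hlin i hi.1 l hl.1 hil) (hlin j hj.1 l hl.1 hjl)).trans
    (card_le_card (union_subset (union_subset hi.2 hj.2) hl.2))
  omega

end TriangleCover

namespace KG2

variable {n : ℕ}

lemma nonempty_val (v : KVert n) : v.1.Nonempty := card_pos.mp (by rw [v.2]; norm_num)

section UpperBound

variable {a b c d : ℕ}

def lo (v : KVert n) : ℕ := v.1.min' (nonempty_val v)

def hi (v : KVert n) : ℕ := v.1.max' (nonempty_val v)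

lemma lo_lt_hi (v : KVert n) : lo v < hi v :=
  Fin.lt_def.mp (min'_lt_max'_of_card _ (by rw [v.2]; norm_num))

lemma hi_lt (v : KVert n) : hi v < n := (v.1.max' _).2

lemma mem_iff_eq_lo_or_eq_hi {v : KVert n} {x : Fin n} :
    x ∈ v.1 ↔ (x : ℕ) = lo v ∨ (x : ℕ) = hi v := by
  have hpair : v.1 = {v.1.min' (nonempty_val v), v.1.max' (nonempty_val v)} := by
    refine (eq_of_subset_of_card_le ?_ ?_).symm
    · simp [insert_subset_iff, min'_mem, max'_mem]
    · rw [v.2, card_pair (min'_lt_max'_of_card _ (by rw [v.2]; norm_num)).ne]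
  rw [hpair, mem_insert, mem_singleton, Fin.ext_iff, Fin.ext_iff]
  rfl

lemma adj_iff_lo_hi {u w : KVert n} :
    (KG2 n).Adj u w ↔ lo u ≠ lo w ∧ lo u ≠ hi w ∧ hi u ≠ lo w ∧ hi u ≠ hi w := by
  change Disjoint u.1 w.1 ↔ _
  rw [disjoint_left]
  constructor
  · intro h
    have h1 := h (a := ⟨lo u, (lo_lt_hi u).trans (hi_lt u)⟩)
      (mem_iff_eq_lo_or_eq_hi.mpr (Or.inl rfl))
    have h2 := h (a := ⟨hi u, hi_lt u⟩) (mem_iff_eq_lo_or_eq_hi.mpr (Or.inr rfl))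
    rw [mem_iff_eq_lo_or_eq_hi] at h1 h2
    simp only at h1 h2
    omega
  · intro h x hu hw
    rw [mem_iff_eq_lo_or_eq_hi] at hu hw
    omega

lemma exists_lo_hi (hab : a < b) (hb : b < n) : ∃ v : KVert n, lo v = a ∧ hi v = b := by
  let v : KVert n :=
    ⟨{⟨a, hab.trans hb⟩, ⟨b, hb⟩}, card_pair (by simp [Fin.ext_iff]; omega)⟩
  have h := lo_lt_hi v
  have ha : ∃ x ∈ v.1, (x : ℕ) = a := ⟨⟨a, hab.trans hb⟩, by simp [v], rfl⟩
  have hb : ∃ x ∈ v.1, (x : ℕ) = b := ⟨⟨b, hb⟩, by simp [v], rfl⟩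
  simp only [mem_iff_eq_lo_or_eq_hi] at ha hb
  refine ⟨v, ?_, ?_⟩ <;> omega

/- The `n` classes, for `a < b`: pairs `{0, b}` with `b ≠ n - 1` (class 0), `{0, n - 1}` (1),
pairs inside `{1, 2, 3}` (2), `{1, 4}` and `{2, 4}` (3), `{3, 4}` (4), pairs `{a, n - 1}` with
`a ≠ 0` (5), and for `5 ≤ b ≤ n - 2` the pairs with maximum `b` (class `b + 1`). -/
def tdColor (n a b : ℕ) : ℕ :=
  if a = 0 then (if b = n - 1 then 1 else 0)
  else if b = n - 1 then 5
  else if b ≤ 3 then 2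
  else if b = 4 then (if a = 3 then 4 else 3)
  else b + 1

lemma tdColor_lt (hn : 6 ≤ n) (hb : b < n) : tdColor n a b < n := by
  unfold tdColor; split_ifs <;> omega

lemma exists_tdColor_eq (hn : 6 ≤ n) (hc : c < n) :
    ∃ a b, a < b ∧ b < n ∧ tdColor n a b = c := by
  obtain _ | _ | _ | _ | _ | _ | c := c
  exacts [⟨0, 1, by omega, by omega, by simp [tdColor]; omega⟩,
    ⟨0, n - 1, by omega, by omega, by simp [tdColor]⟩,
    ⟨1, 2, by omega, by omega, by simp [tdColor]; omega⟩,
    ⟨1, 4, by omega, by omega, by simp [tdColor]; omega⟩,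
    ⟨3, 4, by omega, by omega, by simp [tdColor]; omega⟩,
    ⟨1, n - 1, by omega, by omega, by simp [tdColor]⟩,
    ⟨1, c + 5, by omega, by omega, by simp [tdColor]; omega⟩]

lemma tdColor_eq_tdColor (hab : a < b) (hcd : c < d) (h : tdColor n a b = tdColor n c d) :
    a = c ∨ a = d ∨ b = c ∨ b = d := by
  unfold tdColor at h; split_ifs at h <;> omega

lemma exists_tdColor_disjoint (hn : 6 ≤ n) (hab : a < b) (hb : b < n) :
    ∃ e < n, ∀ c d, c < d → d < n → tdColor n c d = e →
      a ≠ c ∧ a ≠ d ∧ b ≠ c ∧ b ≠ d := by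
  by_cases h34 : a ≠ 3 ∧ a ≠ 4 ∧ b ≠ 3 ∧ b ≠ 4
  · exact ⟨4, by omega, fun c d _ _ h => by unfold tdColor at h; split_ifs at h <;> omega⟩
  by_cases h0 : a ≠ 0 ∧ b ≠ n - 1
  · exact ⟨1, by omega, fun c d _ _ h => by unfold tdColor at h; split_ifs at h <;> omega⟩
  by_cases h3 : a = 3 ∨ b = 3
  · exact ⟨3, by omega, fun c d _ _ h => by unfold tdColor at h; split_ifs at h <;> omega⟩
  · exact ⟨2, by omega, fun c d _ _ h => by unfold tdColor at h; split_ifs at h <;> omega⟩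

theorem exists_isTDColoring (hn : 6 ≤ n) :
    ∃ C : Fin n → Set (KVert n), IsTDColoring (KG2 n) C := by
  refine ⟨_, isTDColoring_of_fibers
    (fun v => ⟨tdColor n (lo v) (hi v), tdColor_lt hn (hi_lt v)⟩)
    (fun i => ?_) (fun u w h => ?_) (fun v => ?_)⟩
  · obtain ⟨a, b, hab, hb, h⟩ := exists_tdColor_eq hn i.2
    obtain ⟨v, rfl, rfl⟩ := exists_lo_hi hab hb
    exact ⟨v, Fin.ext h⟩
  · have := tdColor_eq_tdColor (lo_lt_hi u) (lo_lt_hi w) (Fin.mk.inj_iff.mp h)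
    rw [adj_iff_lo_hi]
    omega
  · obtain ⟨e, he, hdisj⟩ := exists_tdColor_disjoint hn (lo_lt_hi v) (hi_lt v)
    exact ⟨⟨e, he⟩, fun u hu =>
      adj_iff_lo_hi.mpr (hdisj _ _ (lo_lt_hi u) (hi_lt u) (congrArg Fin.val hu))⟩

end UpperBound

section LowerBound

def pair (x y : Fin n) (h : x ≠ y) : KVert n := ⟨{x, y}, card_pair h⟩

lemma exists_eq_pair_of_mem {v : KVert n} {z : Fin n} (hz : z ∈ v.1) :
    ∃ y, y ≠ z ∧ v.1 = {z, y} := by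
  obtain ⟨p, q, hpq, hv⟩ := card_eq_two.mp v.2
  rw [hv, mem_insert, mem_singleton] at hz
  rcases hz with rfl | rfl
  · exact ⟨q, hpq.symm, hv⟩
  · exact ⟨p, hpq, by rw [hv, pair_comm]⟩

lemma card_filter_mem_and_subset {z : Fin n} {W : Finset (Fin n)} (hz : z ∈ W) :
    #{v : KVert n | z ∈ v.1 ∧ v.1 ⊆ W} = #W - 1 := by
  rw [← card_erase_of_mem hz]
  refine (card_bij (fun y hy => pair z y (ne_of_mem_erase hy).symm) ?_ ?_ ?_).symm
  · intro y hy
    simp [pair, insert_subset_iff, mem_of_mem_erase hy, hz]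
  · intro y₁ hy₁ y₂ _ h
    have : y₁ ∈ (pair z y₁ (ne_of_mem_erase hy₁).symm).1 := by simp [pair]
    rw [h] at this
    simpa [pair, ne_of_mem_erase hy₁] using this
  · intro v hv
    obtain ⟨hzv, hvW⟩ := (mem_filter.mp hv).2
    obtain ⟨y, hyz, hv'⟩ := exists_eq_pair_of_mem hzv
    exact ⟨y, mem_erase.mpr ⟨hyz, hvW (by simp [hv'])⟩, Subtype.ext hv'.symm⟩

lemma card_filter_mem (z : Fin n) : #{v : KVert n | z ∈ v.1} = n - 1 := by
  simpa using card_filter_mem_and_subset (mem_univ z)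

lemma exists_triangle_of_not_starlike {F : Set (KVert n)} (hF : F.Nonempty)
    (hF_ind : ∀ u ∈ F, ∀ w ∈ F, ¬ (KG2 n).Adj u w) (hF_star : ¬ Starlike F) :
    ∃ A : Finset (Fin n), #A = 3 ∧ ∀ v, v ∈ F ↔ v.1 ⊆ A := by
  have hmeet : ∀ u ∈ F, ∀ w ∈ F, ∀ x y, u.1 = {x, y} → x ∉ w.1 → y ∈ w.1 := by
    intro u hu w hw x y hxy hx
    obtain ⟨p, hpu, hpw⟩ := not_disjoint_iff.mp (hF_ind u hu w hw)
    rw [hxy, mem_insert, mem_singleton] at hpu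
    rcases hpu with rfl | rfl
    exacts [absurd hpw hx, hpw]
  simp only [Starlike, not_exists, not_forall, exists_prop] at hF_star
  obtain ⟨v₀, hv₀⟩ := hF
  obtain ⟨a, b, hab, h₀⟩ := card_eq_two.mp v₀.2
  obtain ⟨v₁, hv₁, ha₁⟩ := hF_star a
  obtain ⟨v₂, hv₂, hb₂⟩ := hF_star b
  obtain ⟨c, hcb, h₁⟩ := exists_eq_pair_of_mem (hmeet v₀ hv₀ v₁ hv₁ a b h₀ ha₁)
  have hca : c ≠ a := by rintro rfl; simp [h₁] at ha₁
  have hc₂ : c ∈ v₂.1 := hmeet v₁ hv₁ v₂ hv₂ b c h₁ hb₂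
  obtain ⟨d, hda, h₂⟩ :=
    exists_eq_pair_of_mem (hmeet v₀ hv₀ v₂ hv₂ b a (by rw [h₀, pair_comm]) hb₂)
  obtain rfl : c = d := by simpa [h₂, hca] using hc₂
  refine ⟨{a, b, c}, card_eq_three.mpr ⟨a, b, c, hab, hca.symm, hcb.symm, rfl⟩,
    fun v => ⟨?_, ?_⟩⟩
  · intro hv
    obtain ⟨x, y, -, hxy⟩ := card_eq_two.mp v.2
    have e₀ := hF_ind v hv v₀ hv₀
    have e₁ := hF_ind v hv v₁ hv₁
    have e₂ := hF_ind v hv v₂ hv₂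
    change ¬ Disjoint _ _ at e₀ e₁ e₂
    simp only [hxy, h₀, h₁, h₂, disjoint_insert_left, disjoint_singleton_left, mem_insert,
      mem_singleton, insert_subset_iff, singleton_subset_iff] at e₀ e₁ e₂ ⊢
    grind
  · intro hv
    obtain ⟨x, y, hxy, hv'⟩ := card_eq_two.mp v.2
    rw [hv'] at hv
    simp only [mem_insert, mem_singleton, insert_subset_iff, singleton_subset_iff] at hv
    have key : v = v₀ ∨ v = v₁ ∨ v = v₂ := by
      simp only [Subtype.ext_iff, hv', h₀, h₁, h₂]
      rcases hv with ⟨rfl | rfl | rfl, rfl | rfl | rfl⟩ <;> simp_all [pair_comm]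
    rcases key with rfl | rfl | rfl <;> assumption

variable {k : ℕ} {C : Fin k → Set (KVert n)}

open scoped Classical in
lemma two_le_card_filter_not_exists_mem (hC : IsTDColoring (KG2 n) C) (hn : 2 ≤ n)
    (z : Fin n) : 2 ≤ #{i | ¬ ∃ v ∈ C i, z ∈ v.1} := by
  have : Nontrivial (Fin n) := Fin.nontrivial_iff_two_le.mpr hn
  obtain ⟨x₀, hx₀⟩ := exists_ne z
  have havoid : ∀ x (hx : x ≠ z) i, (∀ u ∈ C i, (KG2 n).Adj (pair z x hx.symm) u) →
      ¬ ∃ v ∈ C i, z ∈ v.1 := by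
    rintro x hx i hi ⟨v, hv, hzv⟩
    exact disjoint_left.mp (hi v hv) (by simp [pair]) hzv
  obtain ⟨i₀, ⟨u, hu⟩, hi₀⟩ := hC.2 (pair z x₀ hx₀.symm)
  obtain ⟨y, hy⟩ := nonempty_val u
  have hyz : y ≠ z := fun h => havoid x₀ hx₀ i₀ hi₀ ⟨u, hu, h ▸ hy⟩
  obtain ⟨i₁, -, hi₁⟩ := hC.2 (pair z y hyz.symm)
  have hi₀₁ : i₀ ≠ i₁ := by
    rintro rfl
    exact disjoint_left.mp (hi₁ u hu) (by simp [pair]) hy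
  calc 2 = #{i₀, i₁} := (card_pair hi₀₁).symm
    _ ≤ _ := card_le_card <| insert_subset_iff.mpr
      ⟨mem_filter.mpr ⟨mem_univ _, havoid x₀ hx₀ i₀ hi₀⟩,
        singleton_subset_iff.mpr (mem_filter.mpr ⟨mem_univ _, havoid y hyz i₁ hi₁⟩)⟩

/- A class with a single vertex has two centres; choosing one per star class is what gives
`n + #(nonStarlikeClasses C) ≤ k + #S.nonCenters`. -/
structure ClassShapes (C : Fin k → Set (KVert n)) where
  center : Fin k → Fin n
  triangle : Fin k → Finset (Fin n)
  center_mem : ∀ i, Starlike (C i) → ∀ v ∈ C i, center i ∈ v.1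
  card_triangle : ∀ i, ¬ Starlike (C i) → #(triangle i) = 3
  mem_iff_subset : ∀ i, ¬ Starlike (C i) → ∀ v, v ∈ C i ↔ v.1 ⊆ triangle i

theorem ClassShapes.nonempty (hC : IsProperColoring (KG2 n) C) : Nonempty (ClassShapes C) := by
  have hcenter : ∀ i, ∃ c : Fin n, Starlike (C i) → ∀ v ∈ C i, c ∈ v.1 := fun i => by
    by_cases h : Starlike (C i)
    · exact h.imp fun _ hc _ => hc
    · obtain ⟨v, -⟩ := hC.2.1 i
      exact (nonempty_val v).imp fun _ _ h' => absurd h' h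
  have htriangle : ∀ i, ∃ A : Finset (Fin n),
      ¬ Starlike (C i) → #A = 3 ∧ ∀ v, v ∈ C i ↔ v.1 ⊆ A := fun i => by
    by_cases h : Starlike (C i)
    · exact ⟨∅, fun h' => absurd h h'⟩
    · exact (exists_triangle_of_not_starlike (hC.2.1 i) (hC.2.2 i) h).imp fun _ hA _ => hA
  choose c hc using hcenter
  choose A hA using htriangle
  exact ⟨⟨c, A, hc, fun i h => (hA i h).1, fun i h => (hA i h).2⟩⟩

open scoped Classical in
noncomputable def nonStarlikeClasses (C : Fin k → Set (KVert n)) : Finset (Fin k) :=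
  {i | ¬ Starlike (C i)}

lemma mem_nonStarlikeClasses {i : Fin k} : i ∈ nonStarlikeClasses C ↔ ¬ Starlike (C i) := by
  simp [nonStarlikeClasses]

namespace ClassShapes

open scoped Classical

variable (S : ClassShapes C)

noncomputable def nonCenters : Finset (Fin n) :=
  (({i | Starlike (C i)} : Finset (Fin k)).image S.center)ᶜ

lemma center_ne_of_mem_nonCenters {z : Fin n} (hz : z ∈ S.nonCenters) {i : Fin k}
    (hi : Starlike (C i)) : S.center i ≠ z := by
  rintro rfl
  simp only [nonCenters, mem_compl, mem_image, mem_filter, mem_univ, true_and, not_exists,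
    not_and] at hz
  exact hz i hi rfl

lemma add_card_nonStarlikeClasses_le : n + #(nonStarlikeClasses C) ≤ k + #S.nonCenters := by
  have h₁ := card_filter_add_card_filter_not (s := (univ : Finset (Fin k))) (Starlike ∘ C)
  have h₂ : #(({i | Starlike (C i)} : Finset (Fin k)).image S.center) ≤
      #({i | Starlike (C i)} : Finset (Fin k)) := card_image_le
  simp only [nonCenters, nonStarlikeClasses, card_compl, Fintype.card_fin, card_univ,
    Function.comp_apply] at *
  omega

lemma card_inter_triangle_le_one (hC : ∀ v, ∃! i, v ∈ C i) {i j : Fin k}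
    (hi : i ∈ nonStarlikeClasses C) (hj : j ∈ nonStarlikeClasses C) (hij : i ≠ j) :
    #(S.triangle i ∩ S.triangle j) ≤ 1 := by
  by_contra! h
  obtain ⟨x, hx, y, hy, hxy⟩ := one_lt_card.mp h
  rw [mem_inter] at hx hy
  have hmem : ∀ l ∈ nonStarlikeClasses C, x ∈ S.triangle l → y ∈ S.triangle l →
      pair x y hxy ∈ C l := fun l hl hxl hyl =>
    (S.mem_iff_subset l (mem_nonStarlikeClasses.mp hl) _).mpr
      (by simp [pair, insert_subset_iff, hxl, hyl])
  exact hij ((hC _).unique (hmem i hi hx.1 hy.1) (hmem j hj hx.2 hy.2))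

lemma exists_mem_triangle_of_mem_nonCenters (hC : ∀ v, ∃ i, v ∈ C i) {x y : Fin n}
    (hx : x ∈ S.nonCenters) (hy : y ∈ S.nonCenters) (hxy : x ≠ y) :
    ∃ i ∈ nonStarlikeClasses C, x ∈ S.triangle i ∧ y ∈ S.triangle i := by
  obtain ⟨i, hi⟩ := hC (pair x y hxy)
  have hns : ¬ Starlike (C i) := fun hs => by
    have := S.center_mem i hs _ hi
    simp only [pair, mem_insert, mem_singleton] at this
    rcases this with h | h
    exacts [S.center_ne_of_mem_nonCenters hx hs h, S.center_ne_of_mem_nonCenters hy hs h]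
  have hsub := (S.mem_iff_subset i hns _).mp hi
  exact ⟨i, mem_nonStarlikeClasses.mpr hns, hsub (by simp [pair]), hsub (by simp [pair])⟩

lemma card_filter_mem_class_le {z : Fin n} (hz : z ∈ S.nonCenters) (i : Fin k) :
    #{v : KVert n | z ∈ v.1 ∧ v ∈ C i} ≤ (if ∃ v ∈ C i, z ∈ v.1 then 1 else 0) +
      (if i ∈ nonStarlikeClasses C ∧ z ∈ S.triangle i then 1 else 0) := by
  by_cases hex : ∃ v ∈ C i, z ∈ v.1
  swap
  · rw [card_eq_zero.mpr (filter_eq_empty_iff.mpr fun v _ h => hex ⟨v, h.2, h.1⟩)]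
    exact Nat.zero_le _
  rw [if_pos hex]
  by_cases hs : Starlike (C i)
  · have hcz := (S.center_ne_of_mem_nonCenters hz hs).symm
    calc _ ≤ #{v : KVert n | z ∈ v.1 ∧ v.1 ⊆ {z, S.center i}} := by
          refine card_le_card fun v hv => ?_
          obtain ⟨hzv, hvC⟩ := (mem_filter.mp hv).2
          obtain ⟨y, -, hv'⟩ := exists_eq_pair_of_mem hzv
          have hc := S.center_mem i hs v hvC
          simp only [hv', mem_insert, mem_singleton, hcz.symm, false_or] at hc
          simp [hv', hc]
      _ = 1 := by rw [card_filter_mem_and_subset (mem_insert_self _ _), card_pair hcz]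
      _ ≤ _ := Nat.le_add_right _ _
  · have hzA : z ∈ S.triangle i := by
      obtain ⟨v, hv, hzv⟩ := hex
      exact (S.mem_iff_subset i hs v).mp hv hzv
    rw [if_pos ⟨mem_nonStarlikeClasses.mpr hs, hzA⟩]
    calc _ ≤ #{v : KVert n | z ∈ v.1 ∧ v.1 ⊆ S.triangle i} := by
          refine card_le_card fun v hv => ?_
          obtain ⟨hzv, hvC⟩ := (mem_filter.mp hv).2
          exact mem_filter.mpr ⟨mem_univ _, hzv, (S.mem_iff_subset i hs v).mp hvC⟩
      _ = 2 := by rw [card_filter_mem_and_subset hzA, S.card_triangle i hs]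

lemma add_one_le_add_card_filter_mem_triangle (hC : IsTDColoring (KG2 n) C) (hn : 2 ≤ n)
    {z : Fin n} (hz : z ∈ S.nonCenters) :
    n + 1 ≤ k + #{i ∈ nonStarlikeClasses C | z ∈ S.triangle i} := by
  have hsum : n - 1 = ∑ i, #{v : KVert n | z ∈ v.1 ∧ v ∈ C i} := by
    rw [← card_filter_mem z, ← sum_card_filter_mem_eq_card hC.1.1]
    simp_rw [filter_filter]
  have hle := sum_le_sum fun i (_ : i ∈ univ) => S.card_filter_mem_class_le hz i
  rw [sum_add_distrib, sum_boole, sum_boole, ← hsum] at hle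
  have hsplit := card_filter_add_card_filter_not (s := univ) (fun i => ∃ v ∈ C i, z ∈ v.1)
  have htwo := two_le_card_filter_not_exists_mem hC hn z
  have hdeg : ({i | i ∈ nonStarlikeClasses C ∧ z ∈ S.triangle i} : Finset (Fin k)) =
      {i ∈ nonStarlikeClasses C | z ∈ S.triangle i} := by
    ext; simp
  rw [hdeg] at hle
  rw [card_univ, Fintype.card_fin] at hsplit
  simp only [Nat.cast_id] at hle
  omega

end ClassShapes

theorem le_of_isTDColoring (hn : 2 ≤ n) (hC : IsTDColoring (KG2 n) C) : n ≤ k := by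
  obtain ⟨S⟩ := ClassShapes.nonempty hC.1
  by_contra! hk
  have hcover := card_le_card_of_triangle_cover (T := nonStarlikeClasses C) (A := S.triangle)
    (Z := S.nonCenters)
    (fun i hi => S.card_triangle i (mem_nonStarlikeClasses.mp hi))
    (fun i hi j hj hij => S.card_inter_triangle_le_one hC.1.1 hi hj hij)
    (fun x hx y hy hxy =>
      S.exists_mem_triangle_of_mem_nonCenters (fun v => (hC.1.1 v).exists) hx hy hxy)
    (fun z hz => by
      have := S.add_one_le_add_card_filter_mem_triangle hC hn hz
      omega)
  have := S.add_card_nonStarlikeClasses_le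
  omega

end LowerBound

end KG2

/-- For every `n ≥ 6`, `χ_td(KG(n,2)) = n`. -/
theorem stmt12 (n : ℕ) (hn : 6 ≤ n) :
    tdChromNum (KG2 n) = n := by
  obtain ⟨C, hC⟩ := KG2.exists_isTDColoring hn
  exact le_antisymm (Nat.sInf_le ⟨C, hC⟩)
    (le_csInf ⟨n, C, hC⟩ fun _ ⟨_, hC'⟩ => KG2.le_of_isTDColoring (by omega) hC')
end
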